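/- arXiv:1411.7565 — 4 statements merged into one kernel-verified Lean document; each statement's English description precedes it below -/
import Mathlib

section
/- If G is a finite group of measurable transformations of a sample space X, T is a test statistic, the joint distribution of (T(aX))_{a∈G} is invariant under replacing X by gX for every g∈G, and k = ⌈(1-α)·#G⌉ with T^(1)(x) ≤ … ≤ T^(#G)(x) the sorted values of T(gx) over g∈G, then P(T(X) > T^(k)(X)) ≤ α. -/
/-!
Put `V = (T (a • X))_{a ∈ G}`. Right translation `v ↦ (a ↦ v (a * g))` only permutes the
coordinates of `V`, so it fixes the multiset of values and hence the order statistic `T^(k)`,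
while the invariance hypothesis says it fixes the law of `V`. So each event
`{T (g • X) > T^(k) (X)}` has the probability of the rejection event `{T (X) > T^(k) (X)}`.
At most `#G - k` of these events occur at once, so summing over `g` gives
`#G · P(reject) ≤ #G - k ≤ α · #G`.
-/

open MeasureTheory Finset

/-- The `k`-th smallest element (1-based) of a multiset of reals. -/
noncomputable def sortedVal (s : Multiset ℝ) (k : ℕ) : ℝ :=
  (s.sort (· ≤ ·)).getD (k - 1) 0

theorem List.Pairwise.getElem_le_iff_lt_countP {α : Type*} [LinearOrder α] {l : List α}
    (hl : l.Pairwise (· ≤ ·)) {k : ℕ} (hk : k < l.length) (c : α) :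
    l[k] ≤ c ↔ k < l.countP (· ≤ c) := by
  rw [List.pairwise_iff_getElem] at hl
  constructor
  · intro hkc
    have htake : (l.take (k + 1)).countP (· ≤ c) = k + 1 := by
      rw [List.countP_eq_length.mpr]
      · grind
      intro x hx
      obtain ⟨i, hi, rfl⟩ := List.mem_iff_getElem.mp hx
      grind
    have := (List.take_sublist (k + 1) l).countP_le (p := (· ≤ c))
    omega
  · intro hlt
    by_contra! hck
    have hdrop : (l.drop k).countP (· ≤ c) = 0 := by
      rw [List.countP_eq_zero]
      intro x hx
      obtain ⟨i, hi, rfl⟩ := List.mem_iff_getElem.mp hx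
      grind
    have := (l.take k).countP_le_length (p := (· ≤ c))
    rw [← List.take_append_drop k l, List.countP_append, hdrop] at hlt
    grind

section sortedVal

variable {s : Multiset ℝ} {k : ℕ}

theorem sortedVal_le_iff (hk₀ : 1 ≤ k) (hk : k ≤ Multiset.card s) (c : ℝ) :
    sortedVal s k ≤ c ↔ k ≤ s.countP (· ≤ c) := by
  have hlen : k - 1 < (s.sort (· ≤ ·)).length := by rw [Multiset.length_sort]; omega
  rw [sortedVal, List.getD_eq_getElem _ _ hlen,
    (Multiset.pairwise_sort s _).getElem_le_iff_lt_countP hlen, ← Multiset.coe_countP,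
    Multiset.sort_eq]
  omega

theorem countP_sortedVal_lt_le (hk₀ : 1 ≤ k) (hk : k ≤ Multiset.card s) :
    s.countP (sortedVal s k < ·) ≤ Multiset.card s - k := by
  have hle := (sortedVal_le_iff hk₀ hk (sortedVal s k)).mp le_rfl
  have hsplit := Multiset.card_eq_countP_add_countP (sortedVal s k < ·) s
  simp only [not_lt] at hsplit
  omega

theorem measurable_sortedVal_map {ι : Type*} [Fintype ι] (hk₀ : 1 ≤ k)
    (hk : k ≤ Fintype.card ι) :
    Measurable fun v : ι → ℝ => sortedVal (univ.val.map v) k := by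
  refine measurable_of_Iic fun c => ?_
  have hcount : Measurable fun v : ι → ℝ => (univ.val.map v).countP (· ≤ c) := by
    simp only [Multiset.countP_map, ← Finset.filter_val, Finset.card_val, Finset.card_filter]
    exact Finset.measurable_sum _ fun a _ =>
      Measurable.ite (measurableSet_le (measurable_pi_apply a) measurable_const)
        measurable_const measurable_const
  have hcard (v : ι → ℝ) : k ≤ Multiset.card (univ.val.map v) := by simpa using hk
  simp only [Set.preimage, Set.mem_Iic, sortedVal_le_iff hk₀ (hcard _)]
  exact hcount (MeasurableSet.of_discrete (s := Set.Ici k))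

end sortedVal

theorem Multiset.map_univ_val_mulRight {G β : Type*} [Group G] [Fintype G] (v : G → β) (g : G) :
    (univ.val.map fun a => v (a * g)) = univ.val.map v := by
  change univ.val.map (v ∘ Equiv.mulRight g) = _
  rw [← Multiset.map_map, Multiset.map_univ_val_equiv]

theorem card_mul_measure_le_of_map_eq {α ι : Type*} [MeasurableSpace α] [Fintype ι]
    {μ : Measure α} {σ : ι → α → α} (hσ : ∀ i, Measurable (σ i)) (hμ : ∀ i, μ.map (σ i) = μ)
    {A : Set α} [DecidablePred (· ∈ A)] (hA : MeasurableSet A) {m : ℕ}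
    (hm : ∀ x, #{i | σ i x ∈ A} ≤ m) :
    Fintype.card ι * μ A ≤ m * μ Set.univ := by
  have hA' (i : ι) : MeasurableSet (σ i ⁻¹' A) := hσ i hA
  calc Fintype.card ι * μ A = ∑ i, μ (σ i ⁻¹' A) := by
        simp [← Measure.map_apply (hσ _) hA, hμ]
    _ = ∫⁻ x, ∑ i, (σ i ⁻¹' A).indicator 1 x ∂μ := by
        rw [lintegral_finsetSum _ fun i _ => measurable_one.indicator (hA' i)]
        simp only [lintegral_indicator_one (hA' _)]
    _ ≤ ∫⁻ _, (m : ENNReal) ∂μ := lintegral_mono fun x => by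
        classical
        simp only [Set.indicator_apply, Set.mem_preimage, Pi.one_apply]
        rw [Finset.sum_boole]
        exact_mod_cast hm x
    _ = m * μ Set.univ := lintegral_const _

theorem measureReal_sortedVal_lt_apply_one_le {Ω G : Type*} [MeasurableSpace Ω] [Group G]
    [Fintype G] {P : Measure Ω} [IsProbabilityMeasure P] {V : Ω → G → ℝ} (hV : Measurable V)
    (hinv : ∀ g : G, (P.map V).map (fun v a => v (a * g)) = P.map V) {k : ℕ}
    (hk₀ : 1 ≤ k) (hk : k ≤ Fintype.card G) :
    P.real {ω | sortedVal (univ.val.map (V ω)) k < V ω 1} ≤ 1 - k / Fintype.card G := by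
  classical
  set A : Set (G → ℝ) := {v | sortedVal (univ.val.map v) k < v 1}
  have hA : MeasurableSet A :=
    measurableSet_lt (measurable_sortedVal_map hk₀ hk) (measurable_pi_apply 1)
  have hcount (v : G → ℝ) :
      #{g | (fun a => v (a * g)) ∈ A} ≤ Fintype.card G - k := by
    simpa [A, Multiset.map_univ_val_mulRight, Multiset.countP_map, ← Finset.filter_val,
      Finset.card_val] using countP_sortedVal_lt_le (s := univ.val.map v) hk₀ (by simpa using hk)
  have := Measure.isProbabilityMeasure_map (μ := P) hV.aemeasurable
  have hbound := card_mul_measure_le_of_map_eq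
    (fun g => measurable_pi_lambda _ fun a => measurable_pi_apply (a * g)) hinv hA hcount
  rw [measure_univ, mul_one] at hbound
  have hreal := ENNReal.toReal_mono (by simp) hbound
  rw [ENNReal.toReal_mul, ENNReal.toReal_natCast, ENNReal.toReal_natCast,
    Nat.cast_sub hk] at hreal
  have hn : (0 : ℝ) < Fintype.card G := by exact_mod_cast Fintype.card_pos
  rw [measureReal_def]
  change (P (V ⁻¹' A)).toReal ≤ _
  rw [← Measure.map_apply hV hA, le_sub_iff_add_le, ← le_sub_iff_add_le', div_le_iff₀ hn]
  linarith

/-- the basic permutation test with the full group has level at most α. -/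
theorem basic_permutation_test_level
    {Ω 𝒳 G : Type*} [MeasurableSpace Ω] [MeasurableSpace 𝒳]
    [Group G] [Fintype G] [MulAction G 𝒳]
    (P : Measure Ω) [IsProbabilityMeasure P]
    (X : Ω → 𝒳) (hX : Measurable X)
    (hG : ∀ g : G, Measurable fun x : 𝒳 => g • x)
    (T : 𝒳 → ℝ) (hT : Measurable T)
    (α : ℝ) (hα : α ∈ Set.Ico (0 : ℝ) 1)
    (hinv : ∀ g : G,
      Measure.map (fun ω => fun a : G => T (a • X ω)) P =
        Measure.map (fun ω => fun a : G => T (a • g • X ω)) P) :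
    (P {ω | T (X ω) >
        sortedVal (Multiset.map (fun g : G => T (g • X ω)) Finset.univ.val)
          (Nat.ceil ((1 - α) * (Fintype.card G : ℝ)))}).toReal ≤ α := by
  set n := Fintype.card G
  set k := ⌈(1 - α) * n⌉₊
  have hn : (0 : ℝ) < n := by exact_mod_cast Fintype.card_pos
  have hk₀ : 1 ≤ k := Nat.ceil_pos.mpr (mul_pos (by linarith [hα.2]) hn)
  have hkn : k ≤ n := Nat.ceil_le.mpr (by nlinarith [hα.1])
  set V : Ω → G → ℝ := fun ω a => T (a • X ω)
  have hV : Measurable V := measurable_pi_lambda _ fun a => hT.comp ((hG a).comp hX)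
  have hμ (g : G) : (P.map V).map (fun v a => v (a * g)) = P.map V := by
    rw [Measure.map_map (measurable_pi_lambda _ fun a => measurable_pi_apply _) hV, hinv g]
    simp only [V, Function.comp_def, mul_smul]
  have hE : {ω | T (X ω) > sortedVal (univ.val.map (V ω)) k} =
      {ω | sortedVal (univ.val.map (V ω)) k < V ω 1} := by
    simp only [V, one_smul, gt_iff_lt]
  rw [← measureReal_def, hE]
  refine (measureReal_sortedVal_lt_apply_one_le hV hμ hk₀ hkn).trans ?_
  rw [sub_le_comm, le_div_iff₀ hn]
  exact Nat.le_ceil _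
end

section
/- Suppose there is a partition {G₁,…,G_m} of the finite group G with id ∈ G₁ and #G₁ = … = #G_m, such that (almost surely under H₀) T(gX) = T(g'X) if and only if g and g' lie in the same block G_i. Then the basic permutation test rejecting when T(X) > T^(k)(X), with k = ⌈(1-α)#G⌉, has rejection probability exactly α for every α ∈ {0, 1/m, …, (m-1)/m}. -/
open MeasureTheory Finset

/-! Write `V ω = (T (g • X ω))_g`. The order statistic is read off through counts:
`T⁽ᵏ⁾ < x` iff at least `k` of the values `T (g • X)` lie below `x`, so the test rejects exactly
on the event `k ≤ #{a | V a < V 1}`. Under the partition condition the values of `V` come in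
blocks of `s = #G / m` equal values, so exactly `i s` coordinates `g` have at least
`k = (m - i) s` coordinates strictly below them. By invariance the events
`k ≤ #{a | V a < V g}` all have the same probability, and their indicators sum to `i s` almost
surely, so each has probability `i s / #G = i / m`. -/

theorem List.Pairwise.getElem_lt_iff_lt_countP {α : Type*} [LinearOrder α] {L : List α}
    (hL : L.Pairwise (· ≤ ·)) {k : ℕ} (hk : k < L.length) (x : α) :
    L[k] < x ↔ k < L.countP (· < x) := by
  constructor
  · intro hx
    have hprefix : (L.take (k + 1)).countP (· < x) = k + 1 := by
      rw [List.countP_eq_length.mpr, List.length_take, min_eq_left hk]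
      intro y hy
      obtain ⟨j, hj, rfl⟩ := List.mem_iff_getElem.mp hy
      rw [List.getElem_take]
      simp only [List.length_take] at hj
      exact decide_eq_true <|
        (hL.rel_get_of_le (a := ⟨j, by omega⟩) (b := ⟨k, hk⟩) (by simp; omega)).trans_lt hx
    have := (L.take_sublist (k + 1)).countP_le (p := (· < x))
    omega
  · intro hcount
    by_contra! hx
    have hsuffix : (L.drop k).countP (· < x) = 0 := by
      rw [List.countP_eq_zero]
      intro y hy
      obtain ⟨j, hj, rfl⟩ := List.mem_iff_getElem.mp hy
      rw [List.getElem_drop]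
      simp only [List.length_drop] at hj
      simpa using hx.trans
        (hL.rel_get_of_le (a := ⟨k, hk⟩) (b := ⟨k + j, by omega⟩) (by simp))
    have hprefix := List.countP_le_length (p := (· < x)) (l := L.take k)
    rw [← L.take_append_drop k, List.countP_append, hsuffix] at hcount
    simp only [List.length_take] at hprefix
    omega

theorem sortedVal_lt_iff {s : Multiset ℝ} {k : ℕ} (hk₀ : 0 < k) (hk : k ≤ Multiset.card s)
    (x : ℝ) : sortedVal s k < x ↔ k ≤ s.countP (· < x) := by
  have hk' : k - 1 < (s.sort (· ≤ ·)).length := by simp; omega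
  rw [sortedVal, List.getD_eq_getElem _ _ hk',
    (Multiset.pairwise_sort s _).getElem_lt_iff_lt_countP hk', ← Multiset.coe_countP,
    Multiset.sort_eq]
  omega

theorem sortedVal_map_lt_iff {ι : Type*} [Fintype ι] (v : ι → ℝ) {k : ℕ} (hk₀ : 0 < k)
    (hk : k ≤ Fintype.card ι) (x : ℝ) :
    sortedVal (univ.val.map v) k < x ↔ k ≤ #{a | v a < x} := by
  rw [sortedVal_lt_iff hk₀ (by simpa using hk), Multiset.countP_map]
  rfl

theorem Finset.card_filter_le_card_filter_lt {α : Type*} [LinearOrder α] (V : Finset α) (j : ℕ) :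
    #{y ∈ V | j ≤ #{z ∈ V | z < y}} = #V - j := by
  set rank : α → ℕ := fun y => #{z ∈ V | z < y}
  have hrank_mono : StrictMonoOn rank V := by
    intro y hy z hz hyz
    refine card_lt_card ⟨fun w hw => ?_, fun hsub => ?_⟩
    · simp only [mem_filter] at hw ⊢
      exact ⟨hw.1, hw.2.trans hyz⟩
    · simpa using (mem_filter.mp (hsub (mem_filter.mpr ⟨hy, hyz⟩))).2
  have hrank_image : V.image rank = range #V := by
    refine eq_of_subset_of_card_le (fun r hr => ?_) ?_
    · obtain ⟨y, hy, rfl⟩ := mem_image.mp hr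
      exact mem_range.mpr <| card_lt_card ⟨filter_subset _ _, fun h => by simpa using h hy⟩
    · rw [card_range, card_image_of_injOn hrank_mono.injOn]
  calc #{y ∈ V | j ≤ rank y}
      = #{r ∈ V.image rank | j ≤ r} := by
        rw [filter_image, card_image_of_injOn (hrank_mono.injOn.mono (filter_subset _ V))]
    _ = #V - j := by
        rw [hrank_image, ← Nat.card_Ico j #V]
        congr 1
        ext r
        simp [and_comm]

theorem Finset.card_filter_comp_eq_mul {ι β : Type*} [DecidableEq β] (s : Finset ι) (f : ι → β)
    {n : ℕ} (hf : ∀ a ∈ s, #{b ∈ s | f b = f a} = n) (p : β → Prop) [DecidablePred p] :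
    #{a ∈ s | p (f a)} = n * #{b ∈ s.image f | p b} := by
  rw [card_eq_sum_card_image f, ← filter_image, mul_comm, ← smul_eq_mul, ← sum_const]
  refine sum_congr rfl fun b hb => ?_
  obtain ⟨hb, hpb⟩ := mem_filter.mp hb
  obtain ⟨a, ha, rfl⟩ := mem_image.mp hb
  rw [← hf a ha, filter_filter]
  exact congrArg card (filter_congr fun b _ => ⟨And.right, fun h => ⟨h ▸ hpb, h⟩⟩)

theorem card_filter_mul_le_card_lt {ι β : Type*} [Fintype ι] [LinearOrder β] (v : ι → β)
    {s : ℕ} (hs : 0 < s) (hv : ∀ a, #{b | v b = v a} = s) (j : ℕ) :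
    #{a | j * s ≤ #{b | v b < v a}} = Fintype.card ι - j * s := by
  set V := univ.image v
  have hfib : ∀ a ∈ (univ : Finset ι), #{b | v b = v a} = s := fun a _ => hv a
  have hcard : Fintype.card ι = s * #V := by
    simpa using card_filter_comp_eq_mul univ v hfib (fun _ => True)
  have hlt : ∀ a, #{b | v b < v a} = s * #{y ∈ V | y < v a} := fun a =>
    card_filter_comp_eq_mul univ v hfib (· < v a)
  calc #{a | j * s ≤ #{b | v b < v a}}
      = #{a | j ≤ #{y ∈ V | y < v a}} := by
        simp only [hlt, mul_comm s, Nat.mul_le_mul_right_iff hs]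
    _ = s * #{y ∈ V | j ≤ #{z ∈ V | z < y}} :=
        card_filter_comp_eq_mul univ v hfib (fun y => j ≤ #{z ∈ V | z < y})
    _ = Fintype.card ι - j * s := by
        rw [V.card_filter_le_card_filter_lt, hcard, Nat.mul_sub, mul_comm s j]

theorem card_mul_measure_preimage_eq {Ω G β : Type*} [MeasurableSpace Ω] [MeasurableSpace β]
    [Mul G] [Fintype G] {P : Measure Ω} {V : Ω → G → β} (hV : Measurable V)
    (hinv : ∀ g, P.map (fun ω a => V ω (a * g)) = P.map V)
    {A : Set (G → β)} [DecidablePred (· ∈ A)] (hA : MeasurableSet A) {N : ℕ}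
    (hN : ∀ᵐ ω ∂P, #{g | (fun a => V ω (a * g)) ∈ A} = N) :
    Fintype.card G * P (V ⁻¹' A) = N * P Set.univ := by
  set W : G → Ω → G → β := fun g ω a => V ω (a * g)
  have hW : ∀ g, Measurable (W g) := fun g =>
    measurable_pi_lambda _ fun a => (measurable_pi_apply (a * g)).comp hV
  have hshift : ∀ g, P (W g ⁻¹' A) = P (V ⁻¹' A) := fun g => by
    rw [← Measure.map_apply (hW g) hA, hinv, Measure.map_apply hV hA]
  calc (Fintype.card G : ENNReal) * P (V ⁻¹' A)
      = ∑ g, ∫⁻ ω, (W g ⁻¹' A).indicator 1 ω ∂P := by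
        simp [lintegral_indicator_one ((hW _) hA), hshift]
    _ = ∫⁻ ω, (#{g | W g ω ∈ A} : ENNReal) ∂P := by
        rw [← lintegral_finsetSum' _ fun g _ => (measurable_one.indicator (hW g hA)).aemeasurable]
        refine lintegral_congr fun ω => ?_
        rw [card_eq_sum_ones, Nat.cast_sum, sum_filter]
        refine sum_congr rfl fun g _ => ?_
        by_cases h : W g ω ∈ A <;> simp [h]
    _ = N * P Set.univ := by
        rw [lintegral_congr_ae (hN.mono fun ω h => congrArg Nat.cast h), lintegral_const]

theorem measurableSet_le_card_filter_lt {ι : Type*} [Fintype ι] (k : ℕ) (i : ι) :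
    MeasurableSet {v : ι → ℝ | k ≤ #{a | v a < v i}} := by
  refine measurableSet_le measurable_const ?_
  simp only [card_filter]
  exact Finset.measurable_sum _ fun a _ => Measurable.ite
    (measurableSet_lt (measurable_pi_apply a) (measurable_pi_apply i)) measurable_const
    measurable_const

/-- under the partition condition (equal-sized equivalence classes of
transformations giving equal test statistics, with `id` in the first class), the basic
permutation test is exact for every `α ∈ {0, 1/m, …, (m-1)/m}`. -/
theorem basic_permutation_test_exact
    {Ω 𝒳 G : Type*} [MeasurableSpace Ω] [MeasurableSpace 𝒳]
    [Group G] [Fintype G] [MulAction G 𝒳]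
    (P : Measure Ω) [IsProbabilityMeasure P]
    (X : Ω → 𝒳) (hX : Measurable X)
    (hG : ∀ g : G, Measurable fun x : 𝒳 => g • x)
    (T : 𝒳 → ℝ) (hT : Measurable T)
    (hinv : ∀ g : G,
      Measure.map (fun ω => fun a : G => T (a • X ω)) P =
        Measure.map (fun ω => fun a : G => T (a • g • X ω)) P)
    -- the partition: `c g` is the index of the block containing `g`
    (m : ℕ) (hm : 0 < m) (c : G → Fin m)
    (hc1 : c 1 = ⟨0, hm⟩)
    (hsize : ∀ i j : Fin m,
      (Finset.univ.filter fun g : G => c g = i).card =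
        (Finset.univ.filter fun g : G => c g = j).card)
    (hcond : ∀ᵐ ω ∂P, ∀ g g' : G, T (g • X ω) = T (g' • X ω) ↔ c g = c g')
    (α : ℝ) (i : ℕ) (hi : i < m) (hαi : α = (i : ℝ) / m) :
    (P {ω | T (X ω) >
        sortedVal (Multiset.map (fun g : G => T (g • X ω)) Finset.univ.val)
          (Nat.ceil ((1 - α) * (Fintype.card G : ℝ)))}).toReal = α := by
  set s := #{g | c g = ⟨0, hm⟩}
  have hs : 0 < s := card_pos.mpr ⟨1, by simp [hc1]⟩
  have hcard : Fintype.card G = m * s := by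
    rw [← card_univ, card_eq_sum_card_fiberwise fun g _ => mem_univ (c g),
      sum_congr rfl fun j _ => hsize j ⟨0, hm⟩, sum_const, card_univ, Fintype.card_fin,
      smul_eq_mul]
  have hm' : (m : ℝ) ≠ 0 := by positivity
  have hk : ⌈(1 - α) * (Fintype.card G : ℝ)⌉₊ = (m - i) * s := by
    rw [hcard, hαi, ← Nat.ceil_natCast (R := ℝ) ((m - i) * s)]
    push_cast [Nat.cast_sub hi.le]
    field_simp
  set V : Ω → G → ℝ := fun ω a => T (a • X ω)
  set A : Set (G → ℝ) := {v | (m - i) * s ≤ #{a | v a < v 1}}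
  have hV : Measurable V := measurable_pi_lambda _ fun a => hT.comp ((hG a).comp hX)
  have hreject : {ω | T (X ω) > sortedVal (univ.val.map (V ω))
      ⌈(1 - α) * (Fintype.card G : ℝ)⌉₊} = V ⁻¹' A := by
    ext ω
    rw [Set.mem_ofPred_eq, gt_iff_lt, hk, sortedVal_map_lt_iff _ (Nat.mul_pos (by omega) hs)
      (hcard ▸ Nat.mul_le_mul_right s (Nat.sub_le m i))]
    simp only [Set.mem_preimage, A, Set.mem_ofPred_eq, V, one_smul]
  have hcount : ∀ᵐ ω ∂P, #{g | (fun a => V ω (a * g)) ∈ A} = i * s := by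
    filter_upwards [hcond] with ω hω
    have hfib : ∀ a, #{b | V ω b = V ω a} = s := fun a => by
      simp only [V, hω]
      exact hsize _ _
    have hshift : ∀ g, #{a | V ω (a * g) < V ω g} = #{a | V ω a < V ω g} := fun g =>
      card_equiv (Equiv.mulRight g) (by simp)
    simp only [A, Set.mem_ofPred_eq, one_mul, hshift]
    rw [card_filter_mul_le_card_lt (V ω) hs hfib, hcard, ← Nat.sub_mul, Nat.sub_sub_self hi.le]
  have hmeasure := card_mul_measure_preimage_eq hV
    (fun g => by simp only [V, mul_smul]; exact (hinv g).symm)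
    (measurableSet_le_card_filter_lt _ _) hcount
  rw [measure_univ, mul_one, hcard] at hmeasure
  have hs' : (s : ℝ) ≠ 0 := by positivity
  rw [hreject, hαi, eq_div_iff hm']
  apply mul_right_cancel₀ hs'
  have hreal := congrArg ENNReal.toReal hmeasure
  simp only [ENNReal.toReal_mul, ENNReal.toReal_natCast, Nat.cast_mul] at hreal
  linear_combination hreal
end

section
/- Under the partition condition (equivalence classes G₁,…,G_m of equal size with equal test statistic values within blocks, distinct values across blocks, a.s.), the statistic D = #{g ∈ G : T(gX) ≥ T(X)} has under H₀ the uniform distribution on {#G/m, 2·#G/m, …, #G}; equivalently D/#G is uniform on {1/m, 2/m, …, 1}. -/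
/-!
Write `Y = (T (a • X))_a` and `N g = #{b | T (g • X) ≤ T (b • X)}`, so that `D = N 1`. Since
`N g` is `D` evaluated at the right translate `a ↦ Y (a * g)`, the invariance of the law of `Y`
makes `P (N g = k)` independent of `g`. Under the partition condition the blocks are totally
ordered by their common value of `T`, and `N` is constant on each block, taking each of the values
`s, 2s, …, ms` on exactly one block; so for every `k ≤ m` exactly `s` elements `g` have
`N g = k s`. Summing `P (N g = k s)` over `g` gives `#G · P (D = k s) = s = #G / m`.
-/

open MeasureTheory Finset

theorem exists_injective_comp_eq_of_iff {α ι β : Type*} {f : α → β} {c : α → ι}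
    (hc : Function.Surjective c) (H : ∀ a b, f a = f b ↔ c a = c b) :
    ∃ v : ι → β, Function.Injective v ∧ f = v ∘ c := by
  refine ⟨f ∘ Function.surjInv hc, fun i j h => ?_, funext fun a => ?_⟩
  · simpa [Function.surjInv_eq] using (H _ _).1 h
  · exact (H _ _).2 (Function.surjInv_eq hc _).symm

section UpperRank

variable {α ι β : Type*} [Fintype α] [Fintype ι] [LinearOrder β]

/-- The statistic `D` of the test is `upperRank (fun a => T (a • X)) 1`. -/
def upperRank (y : α → β) (a : α) : ℕ := #{b | y a ≤ y b}

theorem card_filter_comp_eq_mul [DecidableEq ι] {c : α → ι} {s : ℕ}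
    (hc : ∀ i, #{a | c a = i} = s) (p : ι → Prop) [DecidablePred p] :
    #{a | p (c a)} = s * #{i | p i} := by
  rw [card_eq_sum_card_fiberwise (f := c) (t := {i | p i}) fun a ha => by simpa using ha,
    card_eq_sum_ones {i | p i}, mul_sum, mul_one]
  refine sum_congr rfl fun i hi => ?_
  rw [← hc i, filter_filter]
  congr 1
  exact filter_congr fun a _ => ⟨And.right, fun h => ⟨h ▸ (mem_filter.1 hi).2, h⟩⟩

theorem upperRank_comp [DecidableEq ι] {c : α → ι} {s : ℕ} (hc : ∀ i, #{a | c a = i} = s)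
    (v : ι → β) (a : α) : upperRank (v ∘ c) a = s * upperRank v (c a) :=
  card_filter_comp_eq_mul hc fun i => v (c a) ≤ v i

theorem upperRank_lt_of_lt {y : α → β} {a b : α} (h : y a < y b) :
    upperRank y b < upperRank y a :=
  card_lt_card <| (ssubset_iff_of_subset fun x hx => by
    simp only [mem_filter, mem_univ, true_and] at hx ⊢; exact h.le.trans hx).2
    ⟨a, by simp, by simpa using h⟩

theorem upperRank_injective {y : α → β} (hy : Function.Injective y) :
    Function.Injective (upperRank y) := by
  intro a b hab
  by_contra hne
  rcases lt_or_gt_of_ne (hy.ne hne) with h | h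
  · exact (upperRank_lt_of_lt h).ne' hab
  · exact (upperRank_lt_of_lt h).ne hab

theorem upperRank_mem_Icc (y : α → β) (a : α) : upperRank y a ∈ Icc 1 (Fintype.card α) :=
  mem_Icc.2 ⟨card_pos.2 ⟨a, by simp⟩, card_le_univ _⟩

theorem card_upperRank_eq_one {v : ι → β} (hv : Function.Injective v) {n : ℕ}
    (hn : n ∈ Icc 1 (Fintype.card ι)) : #{i | upperRank v i = n} = 1 := by
  obtain ⟨i, -, rfl⟩ := surj_on_of_inj_on_of_card_le (s := univ) (fun i _ => upperRank v i)
    (fun i _ => upperRank_mem_Icc v i) (fun i j _ _ h => upperRank_injective hv h)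
    (by simp) n hn
  exact card_eq_one.2 ⟨i, eq_singleton_iff_unique_mem.2
    ⟨by simp, fun j hj => upperRank_injective hv (mem_filter.1 hj).2⟩⟩

theorem card_upperRank_eq_of_partition {m s : ℕ} {f : α → β} {c : α → Fin m}
    (H : ∀ a b, f a = f b ↔ c a = c b) (hc : ∀ i, #{a | c a = i} = s) (hs : 0 < s)
    (k : Fin m) : #{a | upperRank f a = (k + 1) * s} = s := by
  have hsurj : Function.Surjective c := fun i => by
    obtain ⟨a, ha⟩ := card_pos.1 (hc i ▸ hs)
    exact ⟨a, (mem_filter.1 ha).2⟩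
  obtain ⟨v, hv, rfl⟩ := exists_injective_comp_eq_of_iff hsurj H
  have hk : k.1 + 1 ∈ Icc 1 (Fintype.card (Fin m)) := by simp [Nat.succ_le_of_lt k.2]
  simp_rw [upperRank_comp hc, mul_comm s, Nat.mul_left_inj hs.ne']
  rw [card_filter_comp_eq_mul hc (fun i => upperRank v i = k + 1), card_upperRank_eq_one hv hk,
    mul_one]

theorem upperRank_comp_mul_right {G : Type*} [Group G] [Fintype G] (y : G → β) (g : G) :
    upperRank (fun a => y (a * g)) 1 = upperRank y g := by
  simp only [upperRank, card_filter, one_mul]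
  exact Fintype.sum_equiv (Equiv.mulRight g) _ _ fun _ => rfl

theorem measurable_upperRank (a : α) : Measurable fun y : α → ℝ => upperRank y a := by
  simp only [upperRank, card_filter]
  exact Finset.measurable_sum _ fun b _ => Measurable.ite
    (measurableSet_le (measurable_pi_apply a) (measurable_pi_apply b)) measurable_const
    measurable_const

end UpperRank

theorem sum_measure_eq_of_ae_card_eq {ι Ω : Type*} [Fintype ι] [MeasurableSpace Ω]
    {μ : Measure Ω} {A : ι → Set Ω} [∀ ω, DecidablePred (ω ∈ A ·)]
    (hA : ∀ i, MeasurableSet (A i)) {n : ℕ}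
    (hn : ∀ᵐ ω ∂μ, #{i | ω ∈ A i} = n) : ∑ i, μ (A i) = n * μ Set.univ := by
  calc ∑ i, μ (A i) = ∫⁻ ω, ∑ i, (A i).indicator 1 ω ∂μ := by
        rw [lintegral_finsetSum _ fun i _ => measurable_one.indicator (hA i)]
        simp_rw [lintegral_indicator_one (hA _)]
    _ = ∫⁻ _, (n : ENNReal) ∂μ := lintegral_congr_ae <| hn.mono fun ω hω => by
        simp [← hω, Set.indicator_apply]
    _ = n * μ Set.univ := lintegral_const _

section Invariance

variable {Ω G : Type*} [MeasurableSpace Ω] [Group G] [Fintype G] {P : Measure Ω}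
  {Y : Ω → G → ℝ}

theorem measure_upperRank_eq_of_map_eq (hY : Measurable Y)
    (hinv : ∀ g, P.map Y = P.map fun ω a => Y ω (a * g)) (g : G) (n : ℕ) :
    P {ω | upperRank (Y ω) g = n} = P {ω | upperRank (Y ω) 1 = n} := by
  have hS : MeasurableSet {y : G → ℝ | upperRank y 1 = n} :=
    measurable_upperRank 1 (measurableSet_singleton n)
  have hYg : Measurable fun ω a => Y ω (a * g) :=
    measurable_pi_lambda _ fun a => (measurable_pi_apply (a * g)).comp hY
  calc P {ω | upperRank (Y ω) g = n}
      = P.map (fun ω a => Y ω (a * g)) {y | upperRank y 1 = n} := by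
        simp_rw [Measure.map_apply hYg hS, Set.preimage_ofPred_eq, upperRank_comp_mul_right]
    _ = P {ω | upperRank (Y ω) 1 = n} := by rw [← hinv, Measure.map_apply hY hS]; rfl

theorem card_mul_measure_upperRank_eq [IsProbabilityMeasure P] (hY : Measurable Y)
    (hinv : ∀ g, P.map Y = P.map fun ω a => Y ω (a * g)) {n k : ℕ}
    (hcount : ∀ᵐ ω ∂P, #{g | upperRank (Y ω) g = k} = n) :
    Fintype.card G * P {ω | upperRank (Y ω) 1 = k} = n := by
  have hA : ∀ g, MeasurableSet {ω | upperRank (Y ω) g = k} := fun g =>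
    (measurable_upperRank g).comp hY (measurableSet_singleton k)
  have hsum := sum_measure_eq_of_ae_card_eq hA hcount
  simp_rw [measure_upperRank_eq_of_map_eq hY hinv _ k, sum_const, card_univ, nsmul_eq_mul,
    measure_univ, mul_one] at hsum
  exact hsum

end Invariance

theorem D_uniform_under_partition_condition_general
    {Ω 𝒳 G : Type*} [MeasurableSpace Ω] [MeasurableSpace 𝒳]
    [Group G] [Fintype G] [MulAction G 𝒳]
    (P : Measure Ω) [IsProbabilityMeasure P]
    (X : Ω → 𝒳) (hX : Measurable X)
    (hG : ∀ g : G, Measurable fun x : 𝒳 => g • x)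
    (T : 𝒳 → ℝ) (hT : Measurable T)
    (hinv : ∀ g : G,
      Measure.map (fun ω => fun a : G => T (a • X ω)) P =
        Measure.map (fun ω => fun a : G => T (a • g • X ω)) P)
    -- the partition: `c g` is the index of the block containing `g`;
    -- all blocks have size `s`, so `#G = m * s`
    (m s : ℕ) (c : G → Fin m)
    (hsize : ∀ i : Fin m, (Finset.univ.filter fun g : G => c g = i).card = s)
    (hcond : ∀ᵐ ω ∂P, ∀ g g' : G, T (g • X ω) = T (g' • X ω) ↔ c g = c g') :
    ∀ i : Fin m,
      (P {ω | (Finset.univ.filter fun g : G => T (g • X ω) ≥ T (X ω)).card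
          = (i.1 + 1) * s}).toReal = 1 / m := by
  intro i
  set Y : Ω → G → ℝ := fun ω a => T (a • X ω)
  have hY : Measurable Y := measurable_pi_lambda _ fun a => hT.comp ((hG a).comp hX)
  have hYinv : ∀ g, P.map Y = P.map fun ω a => Y ω (a * g) := by
    simpa only [Y, mul_smul] using hinv
  have hcardG : Fintype.card G = s * m := by
    simpa using card_filter_comp_eq_mul hsize fun _ => True
  have hs : 0 < s := Nat.pos_of_mul_pos_right (hcardG ▸ Fintype.card_pos)
  have hm : 0 < m := Nat.pos_of_mul_pos_left (hcardG ▸ Fintype.card_pos)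
  have hD := card_mul_measure_upperRank_eq hY hYinv
    (hcond.mono fun ω hω => card_upperRank_eq_of_partition hω hsize hs i)
  have hevent : {ω | #{g : G | T (g • X ω) ≥ T (X ω)} = (i.1 + 1) * s} =
      {ω | upperRank (Y ω) 1 = (i.1 + 1) * s} := by
    simp [Y, upperRank]
  have hD' := congrArg ENNReal.toReal hD
  simp only [hcardG, ← hevent, Nat.cast_mul, ENNReal.toReal_mul, ENNReal.toReal_natCast] at hD'
  rw [eq_div_iff (by positivity)]
  exact mul_left_cancel₀ (by positivity : (s : ℝ) ≠ 0) (by linarith)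

/-- under the partition condition, the statistic
`D = #{g ∈ G : T(gX) ≥ T(X)}` is uniformly distributed on
`{#G/m, 2·#G/m, …, #G}` under the null hypothesis. -/
theorem D_uniform_under_partition_condition
    {Ω 𝒳 G : Type*} [MeasurableSpace Ω] [MeasurableSpace 𝒳]
    [Group G] [Fintype G] [MulAction G 𝒳]
    (P : Measure Ω) [IsProbabilityMeasure P]
    (X : Ω → 𝒳) (hX : Measurable X)
    (hG : ∀ g : G, Measurable fun x : 𝒳 => g • x)
    (T : 𝒳 → ℝ) (hT : Measurable T)
    (hinv : ∀ g : G,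
      Measure.map (fun ω => fun a : G => T (a • X ω)) P =
        Measure.map (fun ω => fun a : G => T (a • g • X ω)) P)
    -- the partition: `c g` is the index of the block containing `g`;
    -- all blocks have size `s`, so `#G = m * s`
    (m s : ℕ) (hm : 0 < m) (c : G → Fin m)
    (hc1 : c 1 = ⟨0, hm⟩)
    (hsize : ∀ i : Fin m, (Finset.univ.filter fun g : G => c g = i).card = s)
    (hcard : Fintype.card G = m * s)
    (hcond : ∀ᵐ ω ∂P, ∀ g g' : G, T (g • X ω) = T (g' • X ω) ↔ c g = c g') :
    ∀ i : Fin m,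
      (P {ω | (Finset.univ.filter fun g : G => T (g • X ω) ≥ T (X ω)).card
          = (i.1 + 1) * s}).toReal = 1 / m :=
  D_uniform_under_partition_condition_general P X hX hG T hT hinv m s c hsize hcond
end

section
/- Under H₀ the statistic p = D/#G, where D = #{g ∈ G : T(gX) ≥ T(X)}, is a valid p-value in the weak sense: P(D/#G ≤ c) ≤ c for all c ∈ [0,1]. -/
open MeasureTheory Finset

lemma perm_det_lemma {G : Type*} [Group G] [Fintype G] (f : G → ℝ) (c : ℝ) (hc : 0 ≤ c) :
    ((Finset.univ.filter fun h : G =>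
        ((Finset.univ.filter fun g : G => f (g * h) ≥ f h).card : ℝ)
          / (Fintype.card G : ℝ) ≤ c).card : ℝ) ≤ c * Fintype.card G := by
  have hn : (0:ℝ) < Fintype.card G := by
    exact_mod_cast Fintype.card_pos
  have key : ∀ h : G, (Finset.univ.filter fun g : G => f (g * h) ≥ f h).card
      = (Finset.univ.filter fun a : G => f a ≥ f h).card := by
    intro h
    exact Finset.card_equiv (Equiv.mulRight h) (by intro g; simp)
  set S := Finset.univ.filter fun h : G =>
      ((Finset.univ.filter fun g : G => f (g * h) ≥ f h).card : ℝ)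
        / (Fintype.card G : ℝ) ≤ c with hSdef
  rcases S.eq_empty_or_nonempty with hS | hS
  · rw [hS]; simp; positivity
  · obtain ⟨h₀, h₀S, hmin⟩ := S.exists_min_image f hS
    have hsub : S ⊆ Finset.univ.filter fun a : G => f a ≥ f h₀ := by
      intro h hh
      simp only [Finset.mem_filter, Finset.mem_univ, true_and, ge_iff_le]
      exact hmin h hh
    have h1 : (S.card : ℝ) ≤ ((Finset.univ.filter fun a : G => f a ≥ f h₀).card : ℝ) :=
      Nat.cast_le.2 (Finset.card_le_card hsub)
    have h2 : ((Finset.univ.filter fun a : G => f a ≥ f h₀).card : ℝ) ≤ c * Fintype.card G := by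
      have hm := (Finset.mem_filter.1 h₀S).2
      rw [key h₀, div_le_iff₀ hn] at hm
      linarith
    linarith

/-- under the null hypothesis, `D/#G` with
`D = #{g ∈ G : T(gX) ≥ T(X)}` is a p-value in the weak sense:
`P(D/#G ≤ c) ≤ c` for every `c ∈ [0,1]`. -/
theorem permutation_p_value_weak
    {Ω 𝒳 G : Type*} [MeasurableSpace Ω] [MeasurableSpace 𝒳]
    [Group G] [Fintype G] [MulAction G 𝒳]
    (P : Measure Ω) [IsProbabilityMeasure P]
    (X : Ω → 𝒳) (hX : Measurable X)
    (hG : ∀ g : G, Measurable fun x : 𝒳 => g • x)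
    (T : 𝒳 → ℝ) (hT : Measurable T)
    (hinv : ∀ g : G,
      Measure.map (fun ω => fun a : G => T (a • X ω)) P =
        Measure.map (fun ω => fun a : G => T (a • g • X ω)) P) :
    ∀ c ∈ Set.Icc (0 : ℝ) 1,
      (P {ω | ((Finset.univ.filter fun g : G => T (g • X ω) ≥ T (X ω)).card : ℝ)
          / (Fintype.card G : ℝ) ≤ c}).toReal ≤ c := by
  rintro c ⟨hc0, hc1⟩
  set n := Fintype.card G with hn
  have hnpos : 0 < n := Fintype.card_pos
  -- the statistic map
  set Y : G → Ω → (G → ℝ) := fun h ω => fun a : G => T (a • h • X ω) with hY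
  have hYmeas : ∀ h : G, Measurable (Y h) := by
    intro h
    apply measurable_pi_lambda
    intro a
    exact hT.comp ((hG a).comp ((hG h).comp hX))
  -- the event set in the path space
  set A : Set (G → ℝ) := {y | ((Finset.univ.filter fun g : G => y g ≥ y 1).card : ℝ)
      / (n : ℝ) ≤ c} with hA
  have hAmeas : MeasurableSet A := by
    have hF : Measurable fun y : G → ℝ =>
        ((Finset.univ.filter fun g : G => y g ≥ y 1).card : ℝ) / (n : ℝ) := by
      have : ∀ y : G → ℝ, ((Finset.univ.filter fun g : G => y g ≥ y 1).card : ℝ)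
          = ∑ g : G, if y g ≥ y 1 then (1:ℝ) else 0 := by
        intro y
        rw [Finset.card_filter]
        push_cast
        rfl
      simp only [this]
      apply Measurable.div_const
      apply Finset.measurable_sum
      intro g _
      exact Measurable.ite (measurableSet_le (measurable_pi_apply 1) (measurable_pi_apply g))
        measurable_const measurable_const
    exact hF measurableSet_Iic
  -- event
  set E : Set Ω := {ω | ((Finset.univ.filter fun g : G => T (g • X ω) ≥ T (X ω)).card : ℝ)
      / (n : ℝ) ≤ c} with hE
  -- every shifted event has the same probability
  have hsame : ∀ h : G, P (Y h ⁻¹' A) = P E := by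
    intro h
    have h1 : P (Y h ⁻¹' A) = (Measure.map (Y h) P) A :=
      (Measure.map_apply (hYmeas h) hAmeas).symm
    have h2 : Measure.map (Y h) P = Measure.map (Y 1) P := by
      have := hinv h
      simp only [hY, one_smul]
      exact this.symm
    have h3 : Y 1 ⁻¹' A = E := by
      ext ω
      simp only [Set.mem_preimage, hA, Set.mem_setOf_eq, hY, one_smul, hE]
    rw [h1, h2, Measure.map_apply (hYmeas 1) hAmeas, h3]
  -- sum over h and bound via the deterministic lemma
  have hmeasB : ∀ h : G, MeasurableSet (Y h ⁻¹' A) := fun h => (hYmeas h) hAmeas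
  have hcount : ∀ ω : Ω, ∑ h : G, (Y h ⁻¹' A).indicator (fun _ => (1:ENNReal)) ω
      ≤ ENNReal.ofReal (c * n) := by
    intro ω
    set f : G → ℝ := fun a => T (a • X ω) with hf
    have heq : ∀ h : G, ω ∈ Y h ⁻¹' A ↔
        ((Finset.univ.filter fun g : G => f (g * h) ≥ f h).card : ℝ) / (n : ℝ) ≤ c := by
      intro h
      have e1 : ∀ g : G, Y h ω g = f (g * h) := by
        intro g; simp [hY, hf, mul_smul]
      have e2 : Y h ω 1 = f h := by simp [hY, hf, one_smul]
      simp only [Set.mem_preimage, hA, Set.mem_setOf_eq, e1, e2, one_mul]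
    have hsum : ∑ h : G, (Y h ⁻¹' A).indicator (fun _ => (1:ENNReal)) ω
        = ((Finset.univ.filter fun h : G =>
            ((Finset.univ.filter fun g : G => f (g * h) ≥ f h).card : ℝ) / (n : ℝ) ≤ c).card
              : ENNReal) := by
      rw [Finset.card_filter]
      push_cast
      apply Finset.sum_congr rfl
      intro h _
      by_cases hh : ω ∈ Y h ⁻¹' A
      · rw [Set.indicator_of_mem hh, if_pos ((heq h).1 hh)]
      · rw [Set.indicator_of_notMem hh, if_neg (fun hx => hh ((heq h).2 hx))]
    rw [hsum]
    have := perm_det_lemma f c hc0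
    calc ((Finset.univ.filter fun h : G =>
            ((Finset.univ.filter fun g : G => f (g * h) ≥ f h).card : ℝ) / (n : ℝ) ≤ c).card
              : ENNReal)
        = ENNReal.ofReal ((Finset.univ.filter fun h : G =>
            ((Finset.univ.filter fun g : G => f (g * h) ≥ f h).card : ℝ) / (n : ℝ) ≤ c).card) := by
          rw [ENNReal.ofReal_natCast]
      _ ≤ ENNReal.ofReal (c * n) := ENNReal.ofReal_le_ofReal this
  have hsumP : ∑ h : G, P (Y h ⁻¹' A) ≤ ENNReal.ofReal (c * n) := by
    have h1 : ∑ h : G, P (Y h ⁻¹' A)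
        = ∫⁻ ω, ∑ h : G, (Y h ⁻¹' A).indicator (fun _ => (1:ENNReal)) ω ∂P := by
      rw [lintegral_finset_sum]
      · apply Finset.sum_congr rfl
        intro h _
        rw [lintegral_indicator (hmeasB h)]
        simp
      · intro h _
        exact (measurable_const.indicator (hmeasB h))
    rw [h1]
    calc ∫⁻ ω, ∑ h : G, (Y h ⁻¹' A).indicator (fun _ => (1:ENNReal)) ω ∂P
        ≤ ∫⁻ _, ENNReal.ofReal (c * n) ∂P := lintegral_mono hcount
      _ = ENNReal.ofReal (c * n) := by simp [lintegral_const]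
  have hnmul : (n : ENNReal) * P E ≤ ENNReal.ofReal (c * n) := by
    have : ∑ h : G, P (Y h ⁻¹' A) = (n : ENNReal) * P E := by
      rw [Finset.sum_congr rfl (fun h _ => hsame h)]
      simp [hn, mul_comm]
    rw [← this]; exact hsumP
  have hPE : P E ≤ ENNReal.ofReal c := by
    have hofr : ENNReal.ofReal (c * n) = (n : ENNReal) * ENNReal.ofReal c := by
      rw [mul_comm c, ENNReal.ofReal_mul (by positivity), ENNReal.ofReal_natCast]
    rw [hofr] at hnmul
    have hne0 : (n : ENNReal) ≠ 0 := by exact_mod_cast hnpos.ne'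
    have hnetop : (n : ENNReal) ≠ ⊤ := ENNReal.natCast_ne_top n
    exact (ENNReal.mul_le_mul_iff_right hne0 hnetop).1 hnmul
  exact ENNReal.toReal_le_of_le_ofReal hc0 hPE
end
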